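/- Let Ext: {0,1}^{n_1}×{0,1}^{n_2} → {0,1}^m be a (k_1,k_2,ε) quantum-proof two-source extractor in the Markov model, strong in X_1. Let ρ be a Markov state on {0,1}^{n_1}×{0,1}^{n_2} with side information C satisfying H_min(X_1|C)_ρ ≥ k_1 and H_min(X_2|C)_ρ ≥ k_2. For each x_1 ∈ {0,1}^{n_1}, let {K_{x_1,j}}_{j∈J} be a finite family of matrices on C with ∑_j K_{x_1,j}† K_{x_1,j} = 1_C (i.e., a Kraus representation of a quantum channel applied to C conditioned on x_1), and define σ(x_1,x_2) := ∑_j K_{x_1,j} ρ(x_1,x_2) K_{x_1,j}†. Then (1/2)∑_{y∈{0,1}^m, x_1} ‖∑_{x_2: Ext(x_1,x_2)=y} σ(x_1,x_2) − (1/2^m)∑_{x_2} σ(x_1,x_2)‖₁ ≤ ε. -/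

import Mathlib

open Kronecker Matrix
open scoped ComplexOrder

/-- Trace norm of a complex matrix: `Tr √(Rᴴ R)`. -/
noncomputable def traceNorm {n : Type*} [Fintype n] [DecidableEq n] (R : Matrix n n ℂ) : ℝ :=
  (((Matrix.posSemidef_conjTranspose_mul_self R).1.eigenvectorUnitary : Matrix n n ℂ) *
    diagonal (fun i => ((Real.sqrt ((Matrix.posSemidef_conjTranspose_mul_self R).1.eigenvalues i) : ℝ) : ℂ)) *
    (star (Matrix.posSemidef_conjTranspose_mul_self R).1.eigenvectorUnitary : Matrix n n ℂ)).trace.re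

/-- `H_min(S|C)_ρ ≥ k` for a (possibly subnormalized) cq-state `ρ`:
for every POVM `{E s}`, `∑ s Tr(E s ρ s) ≤ 2^(-k)`. -/
def HminGe {S C : Type*} [Fintype S] [Fintype C] [DecidableEq C]
    (ρ : S → Matrix C C ℂ) (k : ℝ) : Prop :=
  ∀ E : S → Matrix C C ℂ, (∀ s, (E s).PosSemidef) → (∑ s, E s) = 1 →
    (∑ s, (E s * ρ s).trace).re ≤ (2:ℝ) ^ (-k)

/-- The ccq Markov state `∑ t p(t) • ρ₁ᵗ(x₁) ⊗ ρ₂ᵗ(x₂) ⊗ |t⟩⟨t|` on `C = C₁ ⊗ C₂ ⊗ ℂ^T`. -/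
noncomputable def markovState {n1 n2 d1 d2 : ℕ} {T : Type*} [Fintype T] [DecidableEq T]
    (p : T → ℝ)
    (ρ1 : T → (Fin n1 → Bool) → Matrix (Fin d1) (Fin d1) ℂ)
    (ρ2 : T → (Fin n2 → Bool) → Matrix (Fin d2) (Fin d2) ℂ)
    (x1 : Fin n1 → Bool) (x2 : Fin n2 → Bool) :
    Matrix (Fin d1 × Fin d2 × T) (Fin d1 × Fin d2 × T) ℂ :=
  ∑ t, p t • (ρ1 t x1 ⊗ₖ (ρ2 t x2 ⊗ₖ Matrix.single t t (1:ℂ)))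

/-- `Ext` is a `(k₁,k₂,ε)` quantum-proof two-source extractor in the Markov model,
strong in `X₁` (with `m` output bits). -/
def QProofMarkovStrong1 (n1 n2 m : ℕ)
    (Ext : (Fin n1 → Bool) → (Fin n2 → Bool) → Fin m → Bool) (k1 k2 ε : ℝ) : Prop :=
  ∀ (d1 d2 : ℕ) (T : Type) [Fintype T] [DecidableEq T] (p : T → ℝ)
    (ρ1 : T → (Fin n1 → Bool) → Matrix (Fin d1) (Fin d1) ℂ)
    (ρ2 : T → (Fin n2 → Bool) → Matrix (Fin d2) (Fin d2) ℂ),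
    (∀ t, 0 ≤ p t) → (∑ t, p t) = 1 →
    (∀ t x1, (ρ1 t x1).PosSemidef) → (∀ t, (∑ x1, (ρ1 t x1).trace) = 1) →
    (∀ t x2, (ρ2 t x2).PosSemidef) → (∀ t, (∑ x2, (ρ2 t x2).trace) = 1) →
    HminGe (fun x1 => ∑ x2, markovState p ρ1 ρ2 x1 x2) k1 →
    HminGe (fun x2 => ∑ x1, markovState p ρ1 ρ2 x1 x2) k2 →
    (1/2) * ∑ y : Fin m → Bool, ∑ x1,
      traceNorm ((∑ x2 ∈ Finset.univ.filter (fun x2 => Ext x1 x2 = y),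
          markovState p ρ1 ρ2 x1 x2)
        - ((2:ℝ)^m)⁻¹ • ∑ x2, markovState p ρ1 ρ2 x1 x2) ≤ ε

/-!
Trace-norm contractivity of channels, by duality. Every `Y` factors as `Y = W Σ Vᴴ` with `V`
unitary, `W` a contraction and `Σ` the diagonal of singular values (eigenvalues of `√(YᴴY)`),
so `‖Y‖₁ = max {Re Tr (N Y) : ‖N‖ ≤ 1}` for the spectral norm. For a channel
`Φ(A) = ∑ Kⱼ A Kⱼᴴ` with `∑ Kⱼᴴ Kⱼ = 1`, `Tr (N Φ(A)) = Tr (Φ*(N) A)`, and the adjoint map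
`Φ*(N) = ∑ Kⱼᴴ N Kⱼ` is a contraction whenever `N` is (Cauchy–Schwarz over `j`). Hence
`‖Φ(A)‖₁ ≤ ‖A‖₁`; applied, for each `x₁`, to the operator whose trace norm the extractor
bounds, this gives the theorem.
-/

open scoped InnerProductSpace Matrix.Norms.L2Operator

namespace ContinuousLinearMap

variable {𝕜 E F ι : Type*} [RCLike 𝕜] [NormedAddCommGroup E] [InnerProductSpace 𝕜 E]
  [CompleteSpace E] [NormedAddCommGroup F] [InnerProductSpace 𝕜 F] [CompleteSpace F]
  [Fintype ι] {k : ι → E →L[𝕜] F}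

theorem sum_norm_apply_sq_eq_norm_sq (hk : ∑ i, adjoint (k i) ∘L k i = 1) (x : E) :
    ∑ i, ‖k i x‖ ^ 2 = ‖x‖ ^ 2 := by
  simp only [apply_norm_sq_eq_inner_adjoint_right, ← map_sum, ← inner_sum, ← _root_.sum_apply,
    hk, one_apply_eq_self, inner_self_eq_norm_sq]

theorem norm_sum_adjoint_comp_comp_le (hk : ∑ i, adjoint (k i) ∘L k i = 1) (m : F →L[𝕜] F) :
    ‖∑ i, adjoint (k i) ∘L m ∘L k i‖ ≤ ‖m‖ := by
  refine opNorm_le_bound _ (norm_nonneg m) fun x => ?_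
  set y := (∑ i, adjoint (k i) ∘L m ∘L k i) x with hy
  have key : ‖y‖ ^ 2 ≤ ‖m‖ * (‖y‖ * ‖x‖) :=
    calc ‖y‖ ^ 2 = RCLike.re ⟪y, y⟫_𝕜 := (inner_self_eq_norm_sq y).symm
      _ = ∑ i, RCLike.re ⟪k i y, m (k i x)⟫_𝕜 := by
          nth_rw 2 [hy]
          simp only [_root_.sum_apply, comp_apply, inner_sum, map_sum, adjoint_inner_right]
      _ ≤ ∑ i, ‖m‖ * (‖k i y‖ * ‖k i x‖) := by
          gcongr with i
          calc _ ≤ ‖k i y‖ * ‖m (k i x)‖ := re_inner_le_norm _ _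
            _ ≤ ‖k i y‖ * (‖m‖ * ‖k i x‖) := by gcongr; exact le_opNorm _ _
            _ = _ := by ring
      _ ≤ ‖m‖ * (√(∑ i, ‖k i y‖ ^ 2) * √(∑ i, ‖k i x‖ ^ 2)) := by
          rw [← Finset.mul_sum]
          gcongr
          exact Real.sum_mul_le_sqrt_mul_sqrt _ _ _
      _ = ‖m‖ * (‖y‖ * ‖x‖) := by
          simp only [sum_norm_apply_sq_eq_norm_sq hk, Real.sqrt_sq (norm_nonneg _)]
  rcases (norm_nonneg y).eq_or_lt with hy0 | hy0
  · rw [← hy0]; positivity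
  · nlinarith

end ContinuousLinearMap

namespace Matrix

variable {𝕜 m n : Type*} [RCLike 𝕜] [Fintype m] [Fintype n] [DecidableEq n]

theorem l2_opNorm_le_one_of_isIdempotentElem {U : Matrix m n 𝕜}
    (hU : IsIdempotentElem (Uᴴ * U)) : ‖U‖ ≤ 1 := by
  have h := IsStarProjection.norm_le _ ⟨hU, isHermitian_conjTranspose_mul_self U⟩
  rw [l2_opNorm_conjTranspose_mul_self] at h
  nlinarith [norm_nonneg U]

theorem l2_opNorm_le_one_of_mem_unitaryGroup {V : Matrix n n 𝕜} (hV : V ∈ unitaryGroup n 𝕜) :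
    ‖V‖ ≤ 1 :=
  l2_opNorm_le_one_of_isIdempotentElem <| by
    rw [← star_eq_conjTranspose, Unitary.star_mul_self_of_mem hV]
    exact IsIdempotentElem.one

theorem l2_opNorm_mul_le_one {A B : Matrix n n 𝕜} (hA : ‖A‖ ≤ 1) (hB : ‖B‖ ≤ 1) :
    ‖A * B‖ ≤ 1 :=
  (l2_opNorm_mul A B).trans (mul_le_one₀ hA (norm_nonneg B) hB)

theorem norm_apply_self_le_l2_opNorm (A : Matrix n n 𝕜) (i : n) : ‖A i i‖ ≤ ‖A‖ := by
  have hcol := l2_opNorm_mulVec A (EuclideanSpace.single i 1)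
  have hentry := PiLp.norm_apply_le
    ((EuclideanSpace.equiv n 𝕜).symm (A *ᵥ EuclideanSpace.single i (1 : 𝕜))) i
  simp only [PiLp.ofLp_single, mulVec_single, MulOpposite.op_one, one_smul,
    PiLp.continuousLinearEquiv_symm_apply, PiLp.norm_single, norm_one, mul_one, col_apply]
    at hcol hentry
  exact hentry.trans hcol

theorem re_trace_mul_diagonal_le {C : Matrix n n ℂ} (hC : ‖C‖ ≤ 1) {d : n → ℝ}
    (hd : ∀ i, 0 ≤ d i) : (C * diagonal fun i => (d i : ℂ)).trace.re ≤ ∑ i, d i := by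
  simp only [trace, diag, mul_diagonal, Complex.re_sum, Complex.re_mul_ofReal]
  gcongr with i
  calc (C i i).re * d i ≤ ‖C i i‖ * d i :=
        mul_le_mul_of_nonneg_right (Complex.re_le_norm _) (hd i)
    _ ≤ d i := mul_le_of_le_one_left (hd i) ((norm_apply_self_le_l2_opNorm C i).trans hC)

theorem l2_opNorm_sum_conjTranspose_mul_mul_le {J : Type*} [Fintype J] {K : J → Matrix n n 𝕜}
    (hK : ∑ j, (K j)ᴴ * K j = 1) (M : Matrix n n 𝕜) : ‖∑ j, (K j)ᴴ * M * K j‖ ≤ ‖M‖ := by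
  have hk := congrArg (toEuclideanCLM (n := n) (𝕜 := 𝕜)) hK
  rw [← l2_opNorm_toEuclideanCLM, ← l2_opNorm_toEuclideanCLM]
  simp only [map_sum, map_mul, map_one, ← star_eq_conjTranspose, map_star,
    ContinuousLinearMap.star_eq_adjoint, ContinuousLinearMap.mul_def,
    ContinuousLinearMap.comp_assoc] at hk ⊢
  exact ContinuousLinearMap.norm_sum_adjoint_comp_comp_le hk _

/-- `W = Z D⁻¹ᐟ²`, where `0⁻¹ = 0` makes `W` vanish on the kernel of `Zᴴ Z`. -/
theorem exists_l2_opNorm_le_one_of_conjTranspose_mul_self_eq_diagonal {Z : Matrix m n ℂ}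
    {d : n → ℝ} (hZ : Zᴴ * Z = diagonal fun i => (d i : ℂ)) :
    ∃ W : Matrix m n ℂ, ‖W‖ ≤ 1 ∧ W * diagonal (fun i => (√(d i) : ℂ)) = Z ∧
      Wᴴ * Z = diagonal fun i => (√(d i) : ℂ) := by
  have hd (i : n) : 0 ≤ d i := by
    simpa [hZ] using (posSemidef_conjTranspose_mul_self Z).diag_nonneg (i := i)
  refine ⟨Z * diagonal fun i => (((√(d i))⁻¹ : ℝ) : ℂ), ?_, ?_, ?_⟩
  · refine l2_opNorm_le_one_of_isIdempotentElem ?_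
    rw [conjTranspose_mul, diagonal_conjTranspose, Matrix.mul_assoc, ← Matrix.mul_assoc Zᴴ, hZ,
      diagonal_mul_diagonal, diagonal_mul_diagonal, IsIdempotentElem, diagonal_mul_diagonal]
    congr 1
    funext i
    simp only [Pi.star_apply, Complex.star_def, Complex.conj_ofReal, ← Complex.ofReal_mul,
      ← div_eq_mul_inv, Real.div_sqrt]
    rcases (hd i).eq_or_lt with h | h
    · simp [← h]
    · rw [inv_mul_cancel₀ (Real.sqrt_pos.mpr h).ne', one_mul]
  · ext a i
    rw [Matrix.mul_assoc, diagonal_mul_diagonal, mul_diagonal, ← Complex.ofReal_mul]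
    rcases (hd i).eq_or_lt with h | h
    · have hZii : (Zᴴ * Z) i i = 0 := by rw [hZ, diagonal_apply_eq, ← h, Complex.ofReal_zero]
      rw [mul_apply'] at hZii
      have hcol : Z.col i = 0 := dotProduct_star_self_eq_zero.mp hZii
      simp [← col_apply, hcol]
    · rw [inv_mul_cancel₀ (Real.sqrt_pos.mpr h).ne', Complex.ofReal_one, mul_one]
  · rw [conjTranspose_mul, Matrix.mul_assoc, hZ, diagonal_conjTranspose, diagonal_mul_diagonal]
    congr 1
    funext i
    simp only [Pi.star_apply, Complex.star_def, Complex.conj_ofReal]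
    rw [← Complex.ofReal_mul, ← div_eq_inv_mul, Real.div_sqrt]

theorem conjTranspose_mul_self_mul_eigenvectorUnitary (Y : Matrix n n ℂ)
    (hY : (Yᴴ * Y).IsHermitian) :
    (Y * (hY.eigenvectorUnitary : Matrix n n ℂ))ᴴ * (Y * (hY.eigenvectorUnitary : Matrix n n ℂ)) =
      diagonal fun i => (hY.eigenvalues i : ℂ) := by
  rw [conjTranspose_mul, ← star_eq_conjTranspose, Matrix.mul_assoc, ← Matrix.mul_assoc Yᴴ,
    ← Matrix.mul_assoc, ← Unitary.conjStarAlgAut_star_apply (S := ℂ),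
    hY.conjStarAlgAut_star_eigenvectorUnitary]
  rfl

end Matrix

open Matrix

section TraceNorm

variable {n : Type*} [Fintype n] [DecidableEq n]

theorem traceNorm_eq_sum_sqrt_eigenvalues (Y : Matrix n n ℂ) (hY : (Yᴴ * Y).IsHermitian) :
    traceNorm Y = ∑ i, √(hY.eigenvalues i) := by
  rw [traceNorm, trace_mul_cycle, Unitary.coe_star_mul_self, Matrix.one_mul, trace_diagonal,
    Complex.re_sum]
  simp only [Complex.ofReal_re]

theorem exists_singular_value_decomposition (Y : Matrix n n ℂ) :
    ∃ (W V : Matrix n n ℂ) (s : n → ℝ), ‖W‖ ≤ 1 ∧ V ∈ unitaryGroup n ℂ ∧ (∀ i, 0 ≤ s i) ∧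
      traceNorm Y = ∑ i, s i ∧ Y = W * diagonal (fun i => (s i : ℂ)) * Vᴴ ∧
      Wᴴ * Y * V = diagonal fun i => (s i : ℂ) := by
  have hY : (Yᴴ * Y).IsHermitian := (posSemidef_conjTranspose_mul_self Y).1
  obtain ⟨W, hW, hWZ, hWY⟩ := exists_l2_opNorm_le_one_of_conjTranspose_mul_self_eq_diagonal
    (conjTranspose_mul_self_mul_eigenvectorUnitary Y hY)
  have hV := hY.eigenvectorUnitary.2
  refine ⟨W, hY.eigenvectorUnitary, fun i => √(hY.eigenvalues i), hW, hV,
    fun i => Real.sqrt_nonneg _, traceNorm_eq_sum_sqrt_eigenvalues Y hY, ?_, ?_⟩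
  · have hVV : (hY.eigenvectorUnitary : Matrix n n ℂ) *
        (hY.eigenvectorUnitary : Matrix n n ℂ)ᴴ = 1 :=
      Unitary.mul_star_self_of_mem hV
    rw [hWZ, Matrix.mul_assoc, hVV, Matrix.mul_one]
  · rw [Matrix.mul_assoc, hWY]

theorem re_trace_mul_le_traceNorm {N : Matrix n n ℂ} (hN : ‖N‖ ≤ 1) (Y : Matrix n n ℂ) :
    (N * Y).trace.re ≤ traceNorm Y := by
  obtain ⟨W, V, s, hW, hV, hs, hYs, hY, -⟩ := exists_singular_value_decomposition Y
  have hV' : ‖Vᴴ‖ ≤ 1 := (l2_opNorm_conjTranspose V).trans_le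
    (l2_opNorm_le_one_of_mem_unitaryGroup hV)
  calc (N * Y).trace.re = (Vᴴ * N * W * diagonal fun i => (s i : ℂ)).trace.re := by
        rw [hY, ← Matrix.mul_assoc, ← Matrix.mul_assoc, trace_mul_comm, ← Matrix.mul_assoc,
          ← Matrix.mul_assoc]
    _ ≤ ∑ i, s i :=
        re_trace_mul_diagonal_le (l2_opNorm_mul_le_one (l2_opNorm_mul_le_one hV' hN) hW) hs
    _ = traceNorm Y := hYs.symm

theorem exists_l2_opNorm_le_one_re_trace_mul_eq_traceNorm (Y : Matrix n n ℂ) :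
    ∃ M : Matrix n n ℂ, ‖M‖ ≤ 1 ∧ (M * Y).trace.re = traceNorm Y := by
  obtain ⟨W, V, s, hW, hV, -, hYs, -, hWYV⟩ := exists_singular_value_decomposition Y
  have hW' : ‖Wᴴ‖ ≤ 1 := (l2_opNorm_conjTranspose W).trans_le hW
  refine ⟨V * Wᴴ, l2_opNorm_mul_le_one (l2_opNorm_le_one_of_mem_unitaryGroup hV) hW', ?_⟩
  rw [Matrix.mul_assoc, trace_mul_comm, Matrix.mul_assoc, ← Matrix.mul_assoc, hWYV,
    trace_diagonal, Complex.re_sum, hYs]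
  simp only [Complex.ofReal_re]

end TraceNorm

section Kraus

variable {n J : Type*} [Fintype n] [DecidableEq n] [Fintype J] {K : J → Matrix n n ℂ}

def krausMap (K : J → Matrix n n ℂ) : Matrix n n ℂ →ₗ[ℂ] Matrix n n ℂ :=
  ∑ j, LinearMap.mulLeftRight ℂ (K j, (K j)ᴴ)

theorem krausMap_apply (A : Matrix n n ℂ) : krausMap K A = ∑ j, K j * A * (K j)ᴴ := by
  simp only [krausMap, LinearMap.coe_sum, Finset.sum_apply, LinearMap.mulLeftRight_apply]

theorem traceNorm_krausMap_le (hK : ∑ j, (K j)ᴴ * K j = 1) (A : Matrix n n ℂ) :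
    traceNorm (krausMap K A) ≤ traceNorm A := by
  obtain ⟨M, hM, hMA⟩ := exists_l2_opNorm_le_one_re_trace_mul_eq_traceNorm (krausMap K A)
  have hdual : (M * krausMap K A).trace = ((∑ j, (K j)ᴴ * M * K j) * A).trace := by
    simp only [krausMap_apply, Matrix.mul_sum, Matrix.sum_mul, trace_sum]
    refine Finset.sum_congr rfl fun j _ => ?_
    rw [← Matrix.mul_assoc, ← Matrix.mul_assoc, trace_mul_comm, ← Matrix.mul_assoc,
      ← Matrix.mul_assoc]
  rw [← hMA, hdual]
  exact re_trace_mul_le_traceNorm ((l2_opNorm_sum_conjTranspose_mul_mul_le hK M).trans hM) A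

end Kraus

theorem strong_extractor_secure_after_channel_on_side_information
    (n1 n2 m : ℕ) (Ext : (Fin n1 → Bool) → (Fin n2 → Bool) → Fin m → Bool)
    (k1 k2 ε : ℝ)
    (hExt : QProofMarkovStrong1 n1 n2 m Ext k1 k2 ε)
    (d1 d2 : ℕ) (T : Type) [Fintype T] [DecidableEq T]
    (p : T → ℝ) (hp : ∀ t, 0 ≤ p t) (hpsum : (∑ t, p t) = 1)
    (ρ1 : T → (Fin n1 → Bool) → Matrix (Fin d1) (Fin d1) ℂ)
    (ρ2 : T → (Fin n2 → Bool) → Matrix (Fin d2) (Fin d2) ℂ)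
    (hρ1 : ∀ t x1, (ρ1 t x1).PosSemidef) (hρ1tr : ∀ t, (∑ x1, (ρ1 t x1).trace) = 1)
    (hρ2 : ∀ t x2, (ρ2 t x2).PosSemidef) (hρ2tr : ∀ t, (∑ x2, (ρ2 t x2).trace) = 1)
    (h1 : HminGe (fun x1 => ∑ x2, markovState p ρ1 ρ2 x1 x2) k1)
    (h2 : HminGe (fun x2 => ∑ x1, markovState p ρ1 ρ2 x1 x2) k2)
    -- a quantum channel on `C` conditioned on `x₁`, given by Kraus operators:
    (J : Type) [Fintype J]
    (K : (Fin n1 → Bool) → J →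
      Matrix (Fin d1 × Fin d2 × T) (Fin d1 × Fin d2 × T) ℂ)
    (hK : ∀ x1, (∑ j, (K x1 j)ᴴ * K x1 j) = 1) :
    (1/2) * ∑ y : Fin m → Bool, ∑ x1,
      traceNorm ((∑ x2 ∈ Finset.univ.filter (fun x2 => Ext x1 x2 = y),
          ∑ j, K x1 j * markovState p ρ1 ρ2 x1 x2 * (K x1 j)ᴴ)
        - ((2:ℝ)^m)⁻¹ • ∑ x2, ∑ j, K x1 j * markovState p ρ1 ρ2 x1 x2 * (K x1 j)ᴴ)
      ≤ ε := by
  refine le_trans ?_ (hExt d1 d2 T p ρ1 ρ2 hp hpsum hρ1 hρ1tr hρ2 hρ2tr h1 h2)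
  gcongr with y _ x1 _
  have h := traceNorm_krausMap_le (hK x1)
    ((∑ x2 ∈ Finset.univ.filter (fun x2 => Ext x1 x2 = y), markovState p ρ1 ρ2 x1 x2)
      - ((2:ℝ)^m)⁻¹ • ∑ x2, markovState p ρ1 ρ2 x1 x2)
  rw [map_sub, LinearMap.map_smul_of_tower, map_sum, map_sum] at h
  simpa only [krausMap_apply] using h
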